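/- arXiv:math/0506256 — 3 statements merged into one kernel-verified Lean document; each statement's English description precedes it below -/
import Mathlib

section
/- For P, Q ∈ Γ_n with 0 < r ≤ p_i/q_i ≤ R for all i, (2/(R+1))·I(P||Q) ≤ F(P||Q) ≤ (2/(r+1))·I(P||Q), where F(P||Q) = ∑p_i ln(2p_i/(p_i+q_i)) and I(P||Q) = (1/2)[F(P||Q) + F(Q||P)] is the Jensen-Shannon divergence. -/
open Finset Real

/-!
With `t = p / q`, the summands of `F(P‖Q)` and `F(Q‖P)` are `q f(t)` and `q g(t)` for
`f(t) = t log (2t/(t+1))` and `g(t) = log (2/(t+1))`. Since `I = (F(P‖Q) + F(Q‖P)) / 2`, the two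
bounds amount to `r F(P‖Q) ≤ F(Q‖P) ≤ R F(P‖Q)`. The function `c f - g` vanishes at `1` with
derivative `(c + 1) / 2` there, and its second derivative is `(c - t) / (t (t+1)²)`; so it lies
above its tangent at `1` on `(0, c]` when `1 ≤ c`, and below it on `[c, ∞)` when `c ≤ 1`.
Multiplying by `q` and summing, the tangent terms cancel because `∑ p = ∑ q`, and `r ≤ 1 ≤ R`
holds for the same reason.
-/

lemma le_of_hasDerivAt_of_deriv_sign {f f' : ℝ → ℝ} {a x : ℝ}
    (hf : ∀ y ∈ Set.uIcc a x, HasDerivAt f (f' y) y)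
    (hleft : ∀ y ∈ Set.Ioo x a, f' y ≤ 0) (hright : ∀ y ∈ Set.Ioo a x, 0 ≤ f' y) :
    f a ≤ f x := by
  have hcont : ContinuousOn f (Set.uIcc a x) := fun y hy =>
    (hf y hy).continuousAt.continuousWithinAt
  rcases le_total a x with h | h
  · rw [Set.uIcc_of_le h] at hf hcont
    refine monotoneOn_of_hasDerivWithinAt_nonneg (convex_Icc a x) hcont
      (fun y hy => (hf y (interior_subset hy)).hasDerivWithinAt)
      (fun y hy => hright y (by rwa [interior_Icc] at hy))
      (Set.left_mem_Icc.2 h) (Set.right_mem_Icc.2 h) h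
  · rw [Set.uIcc_of_ge h] at hf hcont
    refine antitoneOn_of_hasDerivWithinAt_nonpos (convex_Icc x a) hcont
      (fun y hy => (hf y (interior_subset hy)).hasDerivWithinAt)
      (fun y hy => hleft y (by rwa [interior_Icc] at hy))
      (Set.left_mem_Icc.2 h) (Set.right_mem_Icc.2 h) h

/-- `c f(t) - g(t)` minus its tangent line at `t = 1`, with `f`, `g` as in the header. -/
noncomputable def jsGap (c t : ℝ) : ℝ :=
  c * (t * log (2 * t / (t + 1))) - log (2 / (t + 1)) - (c + 1) / 2 * (t - 1)

noncomputable def jsGapDeriv (c t : ℝ) : ℝ :=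
  c * (log (2 * t / (t + 1)) + 1 / (t + 1)) + 1 / (t + 1) - (c + 1) / 2

lemma hasDerivAt_jsGap (c : ℝ) {t : ℝ} (ht : 0 < t) :
    HasDerivAt (jsGap c) (jsGapDeriv c t) t := by
  have ht1 : t + 1 ≠ 0 := by positivity
  have hq : HasDerivAt (fun s => 2 * s / (s + 1)) (2 / (t + 1) ^ 2) t :=
    (((hasDerivAt_id t).const_mul 2).div ((hasDerivAt_id t).add_const 1) ht1).congr_deriv
      (by simp only [id]; ring)
  have hr : HasDerivAt (fun s => 2 / (s + 1)) (-2 / (t + 1) ^ 2) t :=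
    ((hasDerivAt_const t (2:ℝ)).div ((hasDerivAt_id t).add_const 1) ht1).congr_deriv
      (by simp only [id]; ring)
  refine ((((hasDerivAt_id t).mul (hq.log (by positivity))).const_mul c).sub
    (hr.log (by positivity)) |>.sub
      (((hasDerivAt_id t).sub_const 1).const_mul ((c + 1) / 2))).congr_deriv ?_
  simp only [jsGapDeriv, id]
  field_simp
  ring

lemma jsGap_one (c : ℝ) : jsGap c 1 = 0 := by norm_num [jsGap]

lemma jsGapDeriv_nonpos {c t : ℝ} (hc : 0 ≤ c) (ht : 0 < t) (h : (c - 1) * (t - 1) ≤ 0) :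
    jsGapDeriv c t ≤ 0 := by
  have hlog := log_le_sub_one_of_pos (show 0 < 2 * t / (t + 1) by positivity)
  calc jsGapDeriv c t
        ≤ c * ((2 * t / (t + 1) - 1) + 1 / (t + 1)) + 1 / (t + 1) - (c + 1) / 2 := by
          unfold jsGapDeriv; gcongr
    _ = (c - 1) * (t - 1) / (2 * (t + 1)) := by field_simp; ring
    _ ≤ 0 := div_nonpos_of_nonpos_of_nonneg h (by positivity)

lemma jsGapDeriv_nonneg {c t : ℝ} (hc : 0 ≤ c) (ht : 0 < t) (h : 0 ≤ (t - 1) * (c - t)) :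
    0 ≤ jsGapDeriv c t := by
  have hlog := one_sub_inv_le_log_of_pos (show 0 < 2 * t / (t + 1) by positivity)
  calc 0 ≤ (t - 1) * (c - t) / (2 * t * (t + 1)) := div_nonneg h (by positivity)
    _ = c * ((1 - (2 * t / (t + 1))⁻¹) + 1 / (t + 1)) + 1 / (t + 1) - (c + 1) / 2 := by
        field_simp; ring
    _ ≤ jsGapDeriv c t := by unfold jsGapDeriv; gcongr

lemma jsGap_nonneg {c t : ℝ} (hc : 1 ≤ c) (ht : 0 < t) (htc : t ≤ c) : 0 ≤ jsGap c t := by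
  rw [← jsGap_one c]
  refine le_of_hasDerivAt_of_deriv_sign (fun y hy => hasDerivAt_jsGap c ?_) (fun y hy => ?_)
    (fun y hy => ?_)
  · exact (lt_min one_pos ht).trans_le hy.1
  · exact jsGapDeriv_nonpos (by linarith) (ht.trans hy.1)
      (mul_nonpos_of_nonneg_of_nonpos (by linarith) (by linarith [hy.2]))
  · exact jsGapDeriv_nonneg (by linarith) (by linarith [hy.1])
      (mul_nonneg (by linarith [hy.1]) (by linarith [hy.2]))

lemma jsGap_nonpos {c t : ℝ} (hc0 : 0 ≤ c) (hc1 : c ≤ 1) (ht : 0 < t) (hct : c ≤ t) :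
    jsGap c t ≤ 0 := by
  have := le_of_hasDerivAt_of_deriv_sign (f := fun s => -jsGap c s) (a := 1) (x := t)
    (fun y hy => (hasDerivAt_jsGap c ((lt_min one_pos ht).trans_le hy.1)).neg)
    (fun y hy => neg_nonpos.2 (jsGapDeriv_nonneg hc0 (ht.trans hy.1)
      (mul_nonneg_of_nonpos_of_nonpos (by linarith [hy.2]) (by linarith [hy.1]))))
    (fun y hy => neg_nonneg.2 (jsGapDeriv_nonpos hc0 (by linarith [hy.1])
      (mul_nonpos_of_nonpos_of_nonneg (by linarith) (by linarith [hy.1]))))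
  simpa [jsGap_one] using this

lemma mul_jsGap_div (c : ℝ) {p q : ℝ} (hp : 0 < p) (hq : 0 < q) :
    q * jsGap c (p / q) =
      c * (p * log (2 * p / (p + q))) - q * log (2 * q / (q + p)) - (c + 1) / 2 * (p - q) := by
  have h₁ : 2 * (p / q) / (p / q + 1) = 2 * p / (p + q) := by field_simp
  have h₂ : 2 / (p / q + 1) = 2 * q / (q + p) := by field_simp; ring
  rw [jsGap, h₁, h₂]
  field_simp

noncomputable def relJSDiv {ι : Type*} [Fintype ι] (p q : ι → ℝ) : ℝ :=
  ∑ i, p i * log (2 * p i / (p i + q i))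

section Sums

variable {ι : Type*} [Fintype ι] {p q : ι → ℝ}

lemma sum_mul_jsGap_div (hp : ∀ i, 0 < p i) (hq : ∀ i, 0 < q i)
    (hsum : ∑ i, p i = ∑ i, q i) (c : ℝ) :
    ∑ i, q i * jsGap c (p i / q i) = c * relJSDiv p q - relJSDiv q p := by
  simp only [mul_jsGap_div c (hp _) (hq _), sum_sub_distrib, ← mul_sum, relJSDiv, hsum, sub_self,
    mul_zero, sub_zero]

lemma relJSDiv_swap_le (hp : ∀ i, 0 < p i) (hq : ∀ i, 0 < q i)
    (hsum : ∑ i, p i = ∑ i, q i) {c : ℝ} (hc : 1 ≤ c) (h : ∀ i, p i / q i ≤ c) :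
    relJSDiv q p ≤ c * relJSDiv p q := by
  have : 0 ≤ ∑ i, q i * jsGap c (p i / q i) := sum_nonneg fun i _ =>
    mul_nonneg (hq i).le (jsGap_nonneg hc (div_pos (hp i) (hq i)) (h i))
  rw [sum_mul_jsGap_div hp hq hsum] at this
  linarith

lemma mul_relJSDiv_le_swap (hp : ∀ i, 0 < p i) (hq : ∀ i, 0 < q i)
    (hsum : ∑ i, p i = ∑ i, q i) {c : ℝ} (hc0 : 0 ≤ c) (hc1 : c ≤ 1) (h : ∀ i, c ≤ p i / q i) :
    c * relJSDiv p q ≤ relJSDiv q p := by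
  have : ∑ i, q i * jsGap c (p i / q i) ≤ 0 := sum_nonpos fun i _ =>
    mul_nonpos_of_nonneg_of_nonpos (hq i).le (jsGap_nonpos hc0 hc1 (div_pos (hp i) (hq i)) (h i))
  rw [sum_mul_jsGap_div hp hq hsum] at this
  linarith

variable [Nonempty ι]

lemma le_one_of_le_div_of_sum_eq (hq : ∀ i, 0 < q i) (hsum : ∑ i, p i = ∑ i, q i) {r : ℝ}
    (h : ∀ i, r ≤ p i / q i) : r ≤ 1 := by
  have hle : ∑ i, r * q i ≤ ∑ i, p i :=
    sum_le_sum fun i _ => (le_div_iff₀ (hq i)).1 (h i)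
  rw [← mul_sum, hsum] at hle
  exact le_of_mul_le_mul_right (by linarith) (sum_pos (fun i _ => hq i) univ_nonempty)

lemma one_le_of_div_le_of_sum_eq (hq : ∀ i, 0 < q i) (hsum : ∑ i, p i = ∑ i, q i) {R : ℝ}
    (h : ∀ i, p i / q i ≤ R) : 1 ≤ R := by
  have hle : ∑ i, p i ≤ ∑ i, R * q i :=
    sum_le_sum fun i _ => (div_le_iff₀ (hq i)).1 (h i)
  rw [← mul_sum, hsum] at hle
  exact le_of_mul_le_mul_right (by linarith) (sum_pos (fun i _ => hq i) univ_nonempty)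

end Sums

theorem stmt12 (n : ℕ) (p q : Fin n → ℝ)
    (hp : ∀ i, 0 < p i) (hq : ∀ i, 0 < q i)
    (hp1 : ∑ i, p i = 1) (hq1 : ∑ i, q i = 1)
    (r R : ℝ) (hr : 0 < r) (hrR : ∀ i, r ≤ p i / q i ∧ p i / q i ≤ R) :
    (2/(R+1)) * (((1:ℝ)/2) * ∑ i, (p i * Real.log (2 * p i / (p i + q i)) + q i * Real.log (2 * q i / (p i + q i)))) ≤ (∑ i, p i * Real.log (2 * p i / (p i + q i))) ∧ (∑ i, p i * Real.log (2 * p i / (p i + q i))) ≤ (2/(r+1)) * (((1:ℝ)/2) * ∑ i, (p i * Real.log (2 * p i / (p i + q i)) + q i * Real.log (2 * q i / (p i + q i)))) := by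
  have hsum : ∑ i, p i = ∑ i, q i := hp1.trans hq1.symm
  have : Nonempty (Fin n) := by
    rcases isEmpty_or_nonempty (Fin n) with h | h
    · simp at hp1
    · exact h
  have hr1 := le_one_of_le_div_of_sum_eq hq hsum fun i => (hrR i).1
  have hR1 := one_le_of_div_le_of_sum_eq hq hsum fun i => (hrR i).2
  have hupper := relJSDiv_swap_le hp hq hsum hR1 fun i => (hrR i).2
  have hlower := mul_relJSDiv_le_swap hp hq hsum hr.le hr1 fun i => (hrR i).1
  have hF : ∑ i, p i * log (2 * p i / (p i + q i)) = relJSDiv p q := rfl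
  have hG : ∑ i, q i * log (2 * q i / (p i + q i)) = relJSDiv q p := by
    simp only [relJSDiv, add_comm]
  rw [sum_add_distrib, hF, hG]
  constructor
  · rw [show 2 / (R + 1) * (1 / 2 * (relJSDiv p q + relJSDiv q p))
      = (relJSDiv p q + relJSDiv q p) / (R + 1) by ring, div_le_iff₀ (by linarith)]
    linarith
  · rw [show 2 / (r + 1) * (1 / 2 * (relJSDiv p q + relJSDiv q p))
      = (relJSDiv p q + relJSDiv q p) / (r + 1) by ring, le_div_iff₀ (by linarith)]
    linarith
end

section
/- For P, Q ∈ Γ_n with 0 < r ≤ p_i/q_i ≤ R for all i, the relative arithmetic-geometric divergence G(P||Q) = ∑((p_i+q_i)/2)ln((p_i+q_i)/(2p_i)) satisfies ((R+1)²/(16R²))·Δ(P||Q) ≤ G(P||Q) ≤ ((r+1)²/(16r²))·Δ(P||Q), where Δ(P||Q) = ∑(p_i - q_i)²/(p_i + q_i). -/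
open Finset Real Set

/-!
Both divergences are Csiszár divergences `∑ qᵢ f (pᵢ / qᵢ)`: `Δ` with `triGen`, and `G` with
`agGen`, whose linear term `(x - 1) / 2` contributes `∑ (pᵢ - qᵢ) / 2 = 0` and makes `agGen'`
vanish at `1`, like `triGen'`. The ratio of their second derivatives is
`agTriRatio x = (x + 1)² / (16 x²)`, which decreases in `x`, so on `[r, R]` it lies between
`agTriRatio R` and `agTriRatio r`. Since `p` and `q` both sum to `1`, some `pᵢ / qᵢ` is `≤ 1` and
some is `≥ 1`, so `1 ∈ [r, R]`; a difference such as `agGen - agTriRatio R • triGen` is then convex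
with a critical point and a zero at `1`, hence nonnegative. Summing the pointwise bounds, weighted
by `qᵢ`, gives both inequalities.
-/

theorem ConvexOn.isMinOn_of_hasDerivAt_eq_zero {S : Set ℝ} {f : ℝ → ℝ} {a : ℝ}
    (hf : ConvexOn ℝ S f) (ha : a ∈ S) (hf' : HasDerivAt f 0 a) : IsMinOn f S a := by
  intro x hx
  show f a ≤ f x
  rcases lt_trichotomy a x with hax | rfl | hxa
  · have := hf.le_slope_of_hasDerivAt ha hx hax hf'
    rw [slope_def_field, le_div_iff₀ (sub_pos.2 hax)] at this
    linarith
  · exact le_rfl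
  · have := hf.slope_le_of_hasDerivAt hx ha hxa hf'
    rw [slope_def_field, div_le_iff₀ (sub_pos.2 hxa)] at this
    linarith

theorem le_of_hasDerivAt2_le {s : Set ℝ} (hs : Convex ℝ s) {f f' f'' g g' g'' : ℝ → ℝ}
    {a x : ℝ} (hf : ∀ y ∈ s, HasDerivAt f (f' y) y) (hf' : ∀ y ∈ s, HasDerivAt f' (f'' y) y)
    (hg : ∀ y ∈ s, HasDerivAt g (g' y) y) (hg' : ∀ y ∈ s, HasDerivAt g' (g'' y) y)
    (h'' : ∀ y ∈ interior s, g'' y ≤ f'' y) (ha : a ∈ s) (hfga : f a = g a) (hfga' : f' a = g' a)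
    (hx : x ∈ s) : g x ≤ f x := by
  have hd (y) (hy : y ∈ s) : HasDerivAt (fun z => f z - g z) (f' y - g' y) y :=
    (hf y hy).sub (hg y hy)
  have hconv : ConvexOn ℝ s (fun z => f z - g z) := convexOn_of_hasDerivWithinAt2_nonneg hs
    (fun y hy => (hd y hy).continuousAt.continuousWithinAt)
    (fun y hy => (hd y (interior_subset hy)).hasDerivWithinAt)
    (fun y hy => ((hf' y (interior_subset hy)).sub (hg' y (interior_subset hy))).hasDerivWithinAt)
    (fun y hy => sub_nonneg.2 (h'' y hy))
  have hmin := hconv.isMinOn_of_hasDerivAt_eq_zero ha (sub_eq_zero.2 hfga' ▸ hd a ha) hx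
  have hmin' : f a - g a ≤ f x - g x := hmin
  linarith

noncomputable def agGen (x : ℝ) : ℝ := (x + 1) / 2 * log ((x + 1) / (2 * x)) + (x - 1) / 2

noncomputable def agGenDeriv (x : ℝ) : ℝ := log ((x + 1) / (2 * x)) / 2 + 1 - (x + 1) / (2 * x)

noncomputable def triGen (x : ℝ) : ℝ := (x - 1) ^ 2 / (x + 1)

noncomputable def triGenDeriv (x : ℝ) : ℝ := (x - 1) * (x + 3) / (x + 1) ^ 2

noncomputable def agTriRatio (x : ℝ) : ℝ := (x + 1) ^ 2 / (16 * x ^ 2)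

lemma agGen_one : agGen 1 = 0 := by norm_num [agGen]

lemma agGenDeriv_one : agGenDeriv 1 = 0 := by norm_num [agGenDeriv]

lemma triGen_one : triGen 1 = 0 := by norm_num [triGen]

lemma triGenDeriv_one : triGenDeriv 1 = 0 := by norm_num [triGenDeriv]

lemma hasDerivAt_add_one_div_two_mul {x : ℝ} (hx : 0 < x) :
    HasDerivAt (fun y => (y + 1) / (2 * y)) (-(1 / (2 * x ^ 2))) x := by
  have := ((hasDerivAt_id' x).add_const 1).div ((hasDerivAt_id' x).const_mul 2) (by positivity)
  refine this.congr_deriv ?_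
  field_simp
  ring

lemma hasDerivAt_agGen {x : ℝ} (hx : 0 < x) : HasDerivAt agGen (agGenDeriv x) x := by
  have hlog := (hasDerivAt_add_one_div_two_mul hx).log (by positivity)
  have := ((((hasDerivAt_id' x).add_const 1).div_const 2).mul hlog).add
    (((hasDerivAt_id' x).sub_const 1).div_const 2)
  refine this.congr_deriv ?_
  simp only [agGenDeriv]
  field_simp
  ring

lemma hasDerivAt_agGenDeriv {x : ℝ} (hx : 0 < x) :
    HasDerivAt agGenDeriv (1 / (2 * x ^ 2 * (x + 1))) x := by
  have h := hasDerivAt_add_one_div_two_mul hx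
  have := ((h.log (by positivity)).div_const 2).add_const 1 |>.sub h
  refine this.congr_deriv ?_
  field_simp
  ring

lemma hasDerivAt_triGen {x : ℝ} (hx : 0 < x) : HasDerivAt triGen (triGenDeriv x) x := by
  have := (((hasDerivAt_id' x).sub_const 1).fun_pow 2).fun_div
    ((hasDerivAt_id' x).add_const 1) (by positivity)
  refine this.congr_deriv ?_
  simp only [triGenDeriv]
  field_simp
  ring

lemma hasDerivAt_triGenDeriv {x : ℝ} (hx : 0 < x) :
    HasDerivAt triGenDeriv (8 / (x + 1) ^ 3) x := by
  have := (((hasDerivAt_id' x).sub_const 1).fun_mul ((hasDerivAt_id' x).add_const 3)).fun_div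
    (((hasDerivAt_id' x).add_const 1).fun_pow 2) (by positivity)
  refine this.congr_deriv ?_
  field_simp
  ring

lemma agGenDeriv2_eq_agTriRatio_mul {x : ℝ} (hx : 0 < x) :
    1 / (2 * x ^ 2 * (x + 1)) = agTriRatio x * (8 / (x + 1) ^ 3) := by
  unfold agTriRatio
  field_simp
  ring

lemma agTriRatio_antitoneOn : AntitoneOn agTriRatio (Ioi 0) := by
  intro x hx y hy hxy
  have hx : 0 < x := hx
  have hy : 0 < y := hy
  have hinv : 1 + y⁻¹ ≤ 1 + x⁻¹ := by gcongr
  have h (t : ℝ) (ht : 0 < t) : agTriRatio t = ((1 + t⁻¹) / 4) ^ 2 := by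
    unfold agTriRatio; field_simp; ring
  rw [h x hx, h y hy]
  gcongr

lemma agTriRatio_mul_triGen_le_agGen {R x : ℝ} (hR : 1 ≤ R) (hx : 0 < x) (hxR : x ≤ R) :
    agTriRatio R * triGen x ≤ agGen x := by
  refine le_of_hasDerivAt2_le (convex_Ioc 0 R) (fun y hy => hasDerivAt_agGen hy.1)
    (fun y hy => hasDerivAt_agGenDeriv hy.1) (fun y hy => (hasDerivAt_triGen hy.1).const_mul _)
    (fun y hy => (hasDerivAt_triGenDeriv hy.1).const_mul _) ?_ ⟨one_pos, hR⟩
    (by simp [agGen_one, triGen_one]) (by simp [agGenDeriv_one, triGenDeriv_one]) ⟨hx, hxR⟩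
  intro y hy
  rw [interior_Ioc] at hy
  obtain ⟨hy, hyR⟩ := hy
  rw [agGenDeriv2_eq_agTriRatio_mul hy]
  exact mul_le_mul_of_nonneg_right (agTriRatio_antitoneOn hy (hy.trans hyR) hyR.le)
    (by positivity)

lemma agGen_le_agTriRatio_mul_triGen {r x : ℝ} (hr : 0 < r) (hr1 : r ≤ 1) (hx : r ≤ x) :
    agGen x ≤ agTriRatio r * triGen x := by
  refine le_of_hasDerivAt2_le (convex_Ici r)
    (fun y hy => (hasDerivAt_triGen (hr.trans_le hy)).const_mul _)
    (fun y hy => (hasDerivAt_triGenDeriv (hr.trans_le hy)).const_mul _)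
    (fun y hy => hasDerivAt_agGen (hr.trans_le hy))
    (fun y hy => hasDerivAt_agGenDeriv (hr.trans_le hy)) ?_ hr1
    (by simp [agGen_one, triGen_one]) (by simp [agGenDeriv_one, triGenDeriv_one]) hx
  intro y hy
  rw [interior_Ici] at hy
  have hy0 : 0 < y := hr.trans hy
  rw [agGenDeriv2_eq_agTriRatio_mul hy0]
  exact mul_le_mul_of_nonneg_right (agTriRatio_antitoneOn hr hy0 hy.le) (by positivity)

lemma mul_agGen_div {p q : ℝ} (hp : 0 < p) (hq : 0 < q) :
    q * agGen (p / q) = (p + q) / 2 * log ((p + q) / (2 * p)) + (p - q) / 2 := by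
  have harg : (p / q + 1) / (2 * (p / q)) = (p + q) / (2 * p) := by field_simp
  rw [agGen, harg]
  field_simp

lemma mul_triGen_div {p q : ℝ} (hp : 0 < p) (hq : 0 < q) :
    q * triGen (p / q) = (p - q) ^ 2 / (p + q) := by
  unfold triGen
  field_simp

theorem stmt13 (n : ℕ) (p q : Fin n → ℝ)
    (hp : ∀ i, 0 < p i) (hq : ∀ i, 0 < q i)
    (hp1 : ∑ i, p i = 1) (hq1 : ∑ i, q i = 1)
    (r R : ℝ) (hr : 0 < r) (hrR : ∀ i, r ≤ p i / q i ∧ p i / q i ≤ R) :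
    ((R+1)^2/(16*R^2)) * (∑ i, (p i - q i)^2 / (p i + q i)) ≤ (∑ i, ((p i + q i)/2) * Real.log ((p i + q i) / (2 * p i))) ∧ (∑ i, ((p i + q i)/2) * Real.log ((p i + q i) / (2 * p i))) ≤ ((r+1)^2/(16*r^2)) * (∑ i, (p i - q i)^2 / (p i + q i)) := by
  have hne : (univ : Finset (Fin n)).Nonempty := nonempty_of_sum_ne_zero (hp1 ▸ one_ne_zero)
  obtain ⟨i, -, hi⟩ := exists_le_of_sum_le hne (hp1.trans hq1.symm).le
  obtain ⟨j, -, hj⟩ := exists_le_of_sum_le hne (hq1.trans hp1.symm).le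
  have hr1 : r ≤ 1 := (hrR i).1.trans ((div_le_one (hq i)).2 hi)
  have hR1 : 1 ≤ R := ((one_le_div (hq j)).2 hj).trans (hrR j).2
  have hG : ∑ i, (p i + q i) / 2 * log ((p i + q i) / (2 * p i)) =
      ∑ i, q i * agGen (p i / q i) := by
    simp only [mul_agGen_div (hp _) (hq _), sum_add_distrib, ← sum_div, sum_sub_distrib, hp1, hq1,
      sub_self, zero_div, add_zero]
  have hΔ : ∑ i, (p i - q i) ^ 2 / (p i + q i) = ∑ i, q i * triGen (p i / q i) := by
    simp only [mul_triGen_div (hp _) (hq _)]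
  rw [hG, hΔ, mul_sum, mul_sum]
  refine ⟨sum_le_sum fun i _ => ?_, sum_le_sum fun i _ => ?_⟩
  · rw [mul_left_comm]
    exact mul_le_mul_of_nonneg_left
      (agTriRatio_mul_triGen_le_agGen hR1 (div_pos (hp i) (hq i)) (hrR i).2) (hq i).le
  · rw [mul_left_comm]
    exact mul_le_mul_of_nonneg_left (agGen_le_agTriRatio_mul_triGen hr hr1 (hrR i).1) (hq i).le
end

section
/- For P, Q ∈ Γ_n with 0 < r ≤ p_i/q_i ≤ R for all i, (2/(1+R²))·T(P||Q) ≤ G(P||Q) ≤ (2/(1+r²))·T(P||Q), where G(P||Q) = ∑((p_i+q_i)/2)ln((p_i+q_i)/(2p_i)) and T(P||Q) = ∑((p_i+q_i)/2)ln((p_i+q_i)/(2√(p_i q_i))). -/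
/-!
Both divergences are Csiszár f-divergences `∑ qᵢ f (pᵢ / qᵢ)`, with generators `fG` and `fT`
vanishing at `1`, and `fG'' = 2 / (1 + x²) · fT''` with `fT'' > 0`. Hence on `[r, R]` the functions
`fG - 2 / (1 + R²) · fT` and `2 / (1 + r²) · fT - fG` are convex, and Jensen's inequality at
`∑ qᵢ · pᵢ / qᵢ = 1` makes their f-divergences nonnegative.
-/

open Finset Real Set

noncomputable def fG (x : ℝ) : ℝ := (x + 1) / 2 * (log ((x + 1) / 2) - log x)

noncomputable def fT (x : ℝ) : ℝ := (x + 1) / 2 * (log ((x + 1) / 2) - log x / 2)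

noncomputable def fG' (x : ℝ) : ℝ := (log ((x + 1) / 2) - log x) / 2 - 1 / (2 * x)

noncomputable def fT' (x : ℝ) : ℝ := (log ((x + 1) / 2) - log x / 2) / 2 + (x - 1) / (4 * x)

lemma hasDerivAt_log_add_one_div_two {x : ℝ} (hx : 0 < x) :
    HasDerivAt (fun y => log ((y + 1) / 2)) (1 / (x + 1)) x := by
  refine ((((hasDerivAt_id' x).add_const 1).div_const 2).log (by positivity)).congr_deriv ?_
  field_simp

lemma hasDerivAt_fG {x : ℝ} (hx : 0 < x) : HasDerivAt fG (fG' x) x := by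
  refine ((((hasDerivAt_id' x).add_const 1).div_const 2).mul
    ((hasDerivAt_log_add_one_div_two hx).sub (hasDerivAt_log hx.ne'))).congr_deriv ?_
  simp only [fG', Pi.sub_apply]
  field_simp
  ring

lemma hasDerivAt_fT {x : ℝ} (hx : 0 < x) : HasDerivAt fT (fT' x) x := by
  refine ((((hasDerivAt_id' x).add_const 1).div_const 2).mul
    ((hasDerivAt_log_add_one_div_two hx).sub
      ((hasDerivAt_log hx.ne').div_const 2))).congr_deriv ?_
  simp only [fT', Pi.sub_apply]
  field_simp
  ring

lemma hasDerivAt_fG' {x : ℝ} (hx : 0 < x) : HasDerivAt fG' (1 / (2 * x ^ 2 * (x + 1))) x := by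
  refine ((((hasDerivAt_log_add_one_div_two hx).sub (hasDerivAt_log hx.ne')).div_const 2).sub
    ((hasDerivAt_const x (1 : ℝ)).div ((hasDerivAt_id' x).const_mul 2)
      (by positivity))).congr_deriv ?_
  field_simp
  ring

lemma hasDerivAt_fT' {x : ℝ} (hx : 0 < x) :
    HasDerivAt fT' ((x ^ 2 + 1) / (4 * x ^ 2 * (x + 1))) x := by
  refine ((((hasDerivAt_log_add_one_div_two hx).sub
    ((hasDerivAt_log hx.ne').div_const 2)).div_const 2).add
    (((hasDerivAt_id' x).sub_const 1).div ((hasDerivAt_id' x).const_mul 4)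
      (by positivity))).congr_deriv ?_
  field_simp
  ring

lemma fG_one : fG 1 = 0 := by norm_num [fG]

lemma fT_one : fT 1 = 0 := by norm_num [fT]

lemma mul_fG_div {p q : ℝ} (hp : 0 < p) (hq : 0 < q) :
    q * fG (p / q) = (p + q) / 2 * log ((p + q) / (2 * p)) := by
  have hpq : (p / q + 1) / 2 = (p + q) / (2 * q) := by field_simp
  rw [fG, hpq, ← log_div (by positivity) (by positivity)]
  field_simp

lemma mul_fT_div {p q : ℝ} (hp : 0 < p) (hq : 0 < q) :
    q * fT (p / q) = (p + q) / 2 * log ((p + q) / (2 * √(p * q))) := by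
  have hpq : (p / q + 1) / 2 = (p + q) / (2 * q) := by field_simp
  have hsqrt : 0 < √(p * q) := by positivity
  rw [fT, hpq, log_div (by positivity) (by positivity), log_div hp.ne' hq.ne',
    log_div (by positivity) (by positivity), log_mul two_ne_zero hq.ne',
    log_mul two_ne_zero hsqrt.ne', log_sqrt (by positivity), log_mul hp.ne' hq.ne']
  field_simp
  ring

lemma convexOn_of_hasDerivAt2_nonneg {D : Set ℝ} (hD : Convex ℝ D) {f f' f'' : ℝ → ℝ}
    (hf : ∀ x ∈ D, HasDerivAt f (f' x) x) (hf' : ∀ x ∈ D, HasDerivAt f' (f'' x) x)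
    (hf'' : ∀ x ∈ D, 0 ≤ f'' x) : ConvexOn ℝ D f :=
  convexOn_of_hasDerivWithinAt2_nonneg hD
    (fun x hx => (hf x hx).continuousAt.continuousWithinAt)
    (fun x hx => (hf x (interior_subset hx)).hasDerivWithinAt)
    (fun x hx => (hf' x (interior_subset hx)).hasDerivWithinAt)
    (fun x hx => hf'' x (interior_subset hx))

lemma fG_deriv2_sub_mul_fT_deriv2 (m : ℝ) {x : ℝ} (hx : 0 < x) :
    1 / (2 * x ^ 2 * (x + 1)) - m * ((x ^ 2 + 1) / (4 * x ^ 2 * (x + 1)))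
      = (2 / (1 + x ^ 2) - m) * ((x ^ 2 + 1) / (4 * x ^ 2 * (x + 1))) := by
  field_simp
  ring

lemma convexOn_fG_sub_mul_fT {s : Set ℝ} (hs : Convex ℝ s) (hs0 : s ⊆ Ioi 0) {m : ℝ}
    (hm : ∀ x ∈ s, m ≤ 2 / (1 + x ^ 2)) : ConvexOn ℝ s (fun x => fG x - m * fT x) := by
  refine convexOn_of_hasDerivAt2_nonneg hs
    (fun x hx => (hasDerivAt_fG (hs0 hx)).sub ((hasDerivAt_fT (hs0 hx)).const_mul m))
    (fun x hx => (hasDerivAt_fG' (hs0 hx)).sub ((hasDerivAt_fT' (hs0 hx)).const_mul m))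
    (fun x hx => ?_)
  have hx0 : 0 < x := hs0 hx
  rw [fG_deriv2_sub_mul_fT_deriv2 m hx0]
  exact mul_nonneg (sub_nonneg.2 (hm x hx)) (by positivity)

lemma convexOn_mul_fT_sub_fG {s : Set ℝ} (hs : Convex ℝ s) (hs0 : s ⊆ Ioi 0) {M : ℝ}
    (hM : ∀ x ∈ s, 2 / (1 + x ^ 2) ≤ M) : ConvexOn ℝ s (fun x => M * fT x - fG x) := by
  refine convexOn_of_hasDerivAt2_nonneg hs
    (fun x hx => ((hasDerivAt_fT (hs0 hx)).const_mul M).sub (hasDerivAt_fG (hs0 hx)))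
    (fun x hx => ((hasDerivAt_fT' (hs0 hx)).const_mul M).sub (hasDerivAt_fG' (hs0 hx)))
    (fun x hx => ?_)
  have hx0 : 0 < x := hs0 hx
  rw [← neg_sub, fG_deriv2_sub_mul_fT_deriv2 M hx0, ← neg_mul, neg_sub]
  exact mul_nonneg (sub_nonneg.2 (hM x hx)) (by positivity)

lemma ConvexOn.map_one_le_sum_mul_map_div {ι : Type*} {s : Set ℝ} {h : ℝ → ℝ}
    (hh : ConvexOn ℝ s h) (t : Finset ι) {p q : ι → ℝ} (hq : ∀ i ∈ t, 0 < q i)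
    (hp1 : ∑ i ∈ t, p i = 1) (hq1 : ∑ i ∈ t, q i = 1) (hs : ∀ i ∈ t, p i / q i ∈ s) :
    h 1 ≤ ∑ i ∈ t, q i * h (p i / q i) := by
  have hcenter : ∑ i ∈ t, q i * (p i / q i) = 1 := by
    rw [← hp1]
    exact sum_congr rfl fun i hi => mul_div_cancel₀ _ (hq i hi).ne'
  simpa only [hcenter, smul_eq_mul] using hh.map_sum_le (fun i hi => (hq i hi).le) hq1 hs

theorem stmt16 (n : ℕ) (p q : Fin n → ℝ)
    (hp : ∀ i, 0 < p i) (hq : ∀ i, 0 < q i)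
    (hp1 : ∑ i, p i = 1) (hq1 : ∑ i, q i = 1)
    (r R : ℝ) (hr : 0 < r) (hrR : ∀ i, r ≤ p i / q i ∧ p i / q i ≤ R) :
    (2/(1+R^2)) * (∑ i, ((p i + q i)/2) * Real.log ((p i + q i) / (2 * Real.sqrt (p i * q i)))) ≤ (∑ i, ((p i + q i)/2) * Real.log ((p i + q i) / (2 * p i))) ∧ (∑ i, ((p i + q i)/2) * Real.log ((p i + q i) / (2 * p i))) ≤ (2/(1+r^2)) * (∑ i, ((p i + q i)/2) * Real.log ((p i + q i) / (2 * Real.sqrt (p i * q i)))) := by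
  have hpos : Icc r R ⊆ Ioi 0 := fun x hx => hr.trans_le hx.1
  have hG : ∑ i, q i * fG (p i / q i) = ∑ i, (p i + q i) / 2 * log ((p i + q i) / (2 * p i)) :=
    sum_congr rfl fun i _ => mul_fG_div (hp i) (hq i)
  have hT : ∑ i, q i * fT (p i / q i)
      = ∑ i, (p i + q i) / 2 * log ((p i + q i) / (2 * √(p i * q i))) :=
    sum_congr rfl fun i _ => mul_fT_div (hp i) (hq i)
  have lower := (convexOn_fG_sub_mul_fT (convex_Icc r R) hpos (m := 2 / (1 + R ^ 2))
    fun x hx => by have : 0 < x := hpos hx; gcongr; exact hx.2).map_one_le_sum_mul_map_div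
    univ (fun i _ => hq i) hp1 hq1 fun i _ => hrR i
  have upper := (convexOn_mul_fT_sub_fG (convex_Icc r R) hpos (M := 2 / (1 + r ^ 2))
    fun x hx => by gcongr; exact hx.1).map_one_le_sum_mul_map_div
    univ (fun i _ => hq i) hp1 hq1 fun i _ => hrR i
  simp only [fG_one, fT_one, mul_sub, sum_sub_distrib, mul_left_comm (q _), ← mul_sum, hG, hT]
    at lower upper
  constructor <;> linarith
end
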